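/- Let S be a best choice recoloring of G and let v be a vertex of G. If r is the number of steps of S that are saved for v, then |S_{|v}| ≤ 1 − r/2 + ⌈(Σ_{w ∈ N⁺(v)} |S_{|w}|)/2⌉, i.e., 2·|S_{|v}| ≤ 2 − r + 2·⌈m/2⌉ where m = Σ_{w ∈ N⁺(v)} |S_{|w}|. -/

import Mathlib

/-!
Framework for the Best Choice Recoloring Algorithm on a chordal graph with
clique number at most `3`, with `k = 5` colors.

A recoloring sequence is a list of steps, each step `(v, c)` recoloring the
vertex `v` with the color `c`.
-/

variable {V : Type*} [DecidableEq V]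

/-- `σ` is a proper coloring of `G`. -/
def IsProperColoring (G : SimpleGraph V) (σ : V → Fin 5) : Prop :=
  ∀ ⦃x y⦄, G.Adj x y → σ x ≠ σ y

/-- Apply a list of recoloring steps to a coloring. -/
def applySteps (α : V → Fin 5) (S : List (V × Fin 5)) : V → Fin 5 :=
  S.foldl (fun σ s => Function.update σ s.1 s.2) α

/-- The number of steps of `S` recoloring the vertex `v`, i.e. `|S_{|v}|`. -/
def recolCount (S : List (V × Fin 5)) (v : V) : ℕ :=
  (S.filter fun s => decide (s.1 = v)).length

/-- `S_{|X}`: the subsequence of the steps of `S` recoloring vertices of `X`. -/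
noncomputable def restrict (X : Set V) (S : List (V × Fin 5)) : List (V × Fin 5) :=
  S.filter fun s => @decide (s.1 ∈ X) (Classical.propDecidable _)

/-- The position, inside the restricted sequence `S_{|X}`, corresponding to the step
of index `i` of `S` (when that step recolors a vertex of `X`). -/
noncomputable def posIn (X : Set V) (S : List (V × Fin 5)) (i : ℕ) : ℕ :=
  (restrict X (S.take i)).length

/-- The step of index `i` (0-based) of the sequence `S` recolors the vertex `x`. -/
def recolorsAt (S : List (V × Fin 5)) (i : ℕ) (x : V) : Prop :=
  ∃ c : Fin 5, S[i]? = some (x, c)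

/-- A perfect elimination ordering `[v₁, …, vₙ]` witnessing chordality with clique
number at most `3`: each vertex has at most two neighbors appearing later in the
list, and when it has two such neighbors they are adjacent. -/
def IsPEOList (G : SimpleGraph V) : List V → Prop
  | [] => True
  | v :: vs =>
      (¬ ∃ w₁ ∈ vs, ∃ w₂ ∈ vs, ∃ w₃ ∈ vs,
          G.Adj v w₁ ∧ G.Adj v w₂ ∧ G.Adj v w₃ ∧ w₁ ≠ w₂ ∧ w₁ ≠ w₃ ∧ w₂ ≠ w₃) ∧
      (∀ w₁ ∈ vs, ∀ w₂ ∈ vs, G.Adj v w₁ → G.Adj v w₂ → w₁ ≠ w₂ → G.Adj w₁ w₂) ∧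
      IsPEOList G vs

/-- `N⁺(x)`: the out-neighborhood of `x`, i.e. its neighbors appearing later in the
perfect elimination ordering `order`. -/
def NPlus (G : SimpleGraph V) (order : List V) (x : V) : Set V :=
  {y | G.Adj x y ∧ order.idxOf x < order.idxOf y}

/-- `N⁺[x] = N⁺(x) ∪ {x}`: the inclusive out-neighborhood of `x`. -/
def NPlusC (G : SimpleGraph V) (order : List V) (x : V) : Set V :=
  insert x (NPlus G order x)

/-- `c` is a valid color for `u` in the current coloring `σ`: it differs from the
current colors of `u` and of its neighbors among the active vertices `A`. -/
def ValidCol (G : SimpleGraph V) (A : List V) (u : V) (σ : V → Fin 5) (c : Fin 5) : Prop :=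
  c ≠ σ u ∧ ∀ w ∈ A, G.Adj u w → c ≠ σ w

/-- The list of colors assigned to (active) neighbors of `u` by the steps of `L`. -/
noncomputable def nbrColors (G : SimpleGraph V) (A : List V) (u : V)
    (L : List (V × Fin 5)) : List (Fin 5) :=
  (L.filter fun s => @decide (G.Adj u s.1 ∧ s.1 ∈ A) (Classical.propDecidable _)).map
    Prod.snd

/-- `c` is a best choice color for `u` (with target color `bu`), given the current
coloring `σ` and the list `future` of the remaining steps (the current one included):
`c` is valid for `u`, and it is `bu` if `bu` does not appear among the colors assigned
to neighbors of `u` in `future`; otherwise it avoids those colors if some valid color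
does; otherwise it is a valid color whose first occurrence among those colors is
latest. -/
def IsBestChoice (G : SimpleGraph V) (A : List V) (u : V) (bu : Fin 5)
    (σ : V → Fin 5) (future : List (V × Fin 5)) (c : Fin 5) : Prop :=
  ValidCol G A u σ c ∧
    (bu ∉ nbrColors G A u future → c = bu) ∧
    (bu ∈ nbrColors G A u future →
      ((∃ c', ValidCol G A u σ c' ∧ c' ∉ nbrColors G A u future) →
          c ∉ nbrColors G A u future) ∧
      ((∀ c', ValidCol G A u σ c' → c' ∈ nbrColors G A u future) →
          ∀ c', ValidCol G A u σ c' →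
            (nbrColors G A u future).idxOf c' ≤ (nbrColors G A u future).idxOf c))

/-- `LBC G A u bu σ S' S`: the sequence `S` is obtained from the sequence `S'`
(a recoloring sequence on the active vertices `A`, starting from the coloring `σ`)
by the Local Best Choice for the vertex `u` with target color `bu`: just before each
step of `S'` recoloring a neighbor of `u` with the current color of `u`, a step
recoloring `u` with a best choice color is inserted, and at the very end `u` is
recolored to `bu` if needed. -/
inductive LBC (G : SimpleGraph V) (A : List V) (u : V) (bu : Fin 5) :
    (V → Fin 5) → List (V × Fin 5) → List (V × Fin 5) → Prop
  | done {σ : V → Fin 5} (h : σ u = bu) : LBC G A u bu σ [] []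
  | final {σ : V → Fin 5} (h : σ u ≠ bu) : LBC G A u bu σ [] [(u, bu)]
  | skip {σ : V → Fin 5} {w : V} {c : Fin 5} {rest S : List (V × Fin 5)}
      (h : ¬(G.Adj u w ∧ w ∈ A ∧ c = σ u))
      (ih : LBC G A u bu (Function.update σ w c) rest S) :
      LBC G A u bu σ ((w, c) :: rest) ((w, c) :: S)
  | insert {σ : V → Fin 5} {w : V} {c : Fin 5} {rest S : List (V × Fin 5)} {c' : Fin 5}
      (h : G.Adj u w ∧ w ∈ A ∧ c = σ u)
      (hbc : IsBestChoice G A u bu σ ((w, c) :: rest) c')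
      (ih : LBC G A u bu (Function.update (Function.update σ u c') w c) rest S) :
      LBC G A u bu σ ((w, c) :: rest) ((u, c') :: (w, c) :: S)

/-- `BCR G α β order S`: `S` is a best choice recoloring of (the subgraph of `G`
induced by the vertices of) `order` from `α` to `β`, obtained by applying the Local
Best Choice successively to the vertices of `order` from the last one to the first
one. -/
inductive BCR (G : SimpleGraph V) (α β : V → Fin 5) : List V → List (V × Fin 5) → Prop
  | nil : BCR G α β [] []
  | cons {v : V} {vs : List V} {S' S : List (V × Fin 5)}
      (hS' : BCR G α β vs S') (h : LBC G vs v (β v) α S' S) :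
      BCR G α β (v :: vs) S

/-- The step of (0-based) index `p` of the restricted sequence `R = S_{|N⁺[v]}` is
saved for `v`: it recolors a vertex of `N⁺(v)` and either `v` is recolored at no step
up to and including it, or `v` is recolored at no step from it on, or neither of the
two steps preceding it in `R` recolors `v`. -/
def SavedForR (G : SimpleGraph V) (order : List V) (v : V)
    (R : List (V × Fin 5)) (p : ℕ) : Prop :=
  (∃ w ∈ NPlus G order v, recolorsAt R p w) ∧
    ((∀ j ≤ p, ¬ recolorsAt R j v) ∨
     (∀ j, p ≤ j → ¬ recolorsAt R j v) ∨
     (∀ q, p - 2 ≤ q → q < p → ¬ recolorsAt R q v))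

/-- The step of index `i` of `S` is saved for the vertex `v`. -/
def SavedFor (G : SimpleGraph V) (order : List V) (S : List (V × Fin 5)) (v : V)
    (i : ℕ) : Prop :=
  (∃ w ∈ NPlus G order v, recolorsAt S i w) ∧
    SavedForR G order v (restrict (NPlusC G order v) S) (posIn (NPlusC G order v) S i)

/-!
Restricted to `N⁺[v]`, a best choice recoloring coincides with the Local Best Choice for `v`
applied to the best choice recoloring of the vertices after `v`, since the Local Best Choice of an
earlier vertex inserts no step in `N⁺[v]`. Having at most two out-neighbours, `v` always has two
valid colours among five. Suppose `v` is recolored to `c'` just before an out-neighbour `w` takes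
its colour, and the next step of `S_{|N⁺[v]}` after that of `w` recolors `v` again. Either this is
the final step: then `c' ≠ β v`, which forces `β v` to be the only future neighbour colour, the
final colour of `w`, contradicting properness of `β`. Or it precedes a step giving an out-neighbour
the colour `c'`, so `c'` is the second future neighbour colour; but a best choice colour either
does not occur at all or has the latest first occurrence among the valid colours, and the two valid
colours both differ from the first future neighbour colour. Hence any two recolorings of `v` in
`S_{|N⁺[v]}` are separated by two steps, which are not saved, and counting positions gives
`r + 3 |S_{|v}| ≤ |S_{|N⁺[v]}| + 2`.
-/
open Finset in
theorem card_le_card_filter_exists_lt_add_one {ι : Type*} [LinearOrder ι] (Q : Finset ι) :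
    #Q ≤ #(Q.filter fun i => ∃ j ∈ Q, i < j) + 1 := by
  have hmax : #(Q \ Q.filter fun i => ∃ j ∈ Q, i < j) ≤ 1 := card_le_one.2 fun a ha b hb => by
    simp only [mem_sdiff, mem_filter, not_and, not_exists, not_lt] at ha hb
    exact le_antisymm (hb.2 hb.1 a ha.1) (ha.2 ha.1 b hb.1)
  have := card_le_card_sdiff_add_card (s := Q) (t := Q.filter fun i => ∃ j ∈ Q, i < j)
  omega

open Finset in
theorem card_add_three_mul_card_le {n : ℕ} {P Q : Finset ℕ} (hP : P ⊆ range n)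
    (hQ : Q ⊆ range n) (hPQ : Disjoint P Q) (hsep : ∀ i ∈ Q, ∀ j ∈ Q, i < j → i + 3 ≤ j)
    (hgap : ∀ i ∈ Q, ∀ j ∈ Q, i < j → i + 1 ∉ P ∧ i + 2 ∉ P) :
    #P + 3 * #Q ≤ n + 2 := by
  classical
  set Q' := Q.filter fun i => ∃ j ∈ Q, i < j
  set B := Q'.biUnion fun i => ({i + 1, i + 2} : Finset ℕ)
  have mem_Q' : ∀ {i}, i ∈ Q' ↔ i ∈ Q ∧ ∃ j ∈ Q, i < j := mem_filter
  have hQ' : #Q ≤ #Q' + 1 := card_le_card_filter_exists_lt_add_one Q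
  have hB : #B = 2 * #Q' := by
    rw [card_biUnion, sum_const_nat fun i _ => card_pair (by omega), mul_comm]
    intro i hi j hj hij
    have := hsep i (mem_Q'.1 hi).1 j (mem_Q'.1 hj).1
    have := hsep j (mem_Q'.1 hj).1 i (mem_Q'.1 hi).1
    simp only [Function.onFun, disjoint_insert_left, disjoint_insert_right, mem_insert,
      mem_singleton, disjoint_singleton]
    omega
  have mem_B : ∀ {p}, p ∈ B → ∃ i ∈ Q, ∃ j ∈ Q, i < j ∧ (p = i + 1 ∨ p = i + 2) := by
    intro p hp
    obtain ⟨i, hi, hp⟩ := mem_biUnion.1 hp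
    obtain ⟨hiQ, j, hj, hij⟩ := mem_Q'.1 hi
    exact ⟨i, hiQ, j, hj, hij, by simpa using hp⟩
  have hBn : B ⊆ range n := fun p hp => by
    obtain ⟨i, hi, j, hj, hij, hp⟩ := mem_B hp
    have := mem_range.1 (hQ hj)
    have := hsep i hi j hj hij
    exact mem_range.2 (by omega)
  have hPB : Disjoint P B := disjoint_right.2 fun p hp hpP => by
    obtain ⟨i, hi, j, hj, hij, rfl | rfl⟩ := mem_B hp
    exacts [(hgap i hi j hj hij).1 hpP, (hgap i hi j hj hij).2 hpP]
  have hQB : Disjoint Q B := disjoint_right.2 fun p hp hpQ => by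
    obtain ⟨i, hi, j, hj, hij, hp⟩ := mem_B hp
    rcases lt_or_gt_of_ne (show i ≠ p by omega) with h | h
    · have := hsep i hi p hpQ h; omega
    · omega
  have hcard := card_le_card (union_subset (union_subset hP hQ) hBn)
  rw [card_union_of_disjoint (disjoint_union_left.2 ⟨hPB, hQB⟩),
    card_union_of_disjoint hPQ, card_range] at hcard
  omega

section Lists

variable {α : Type*}

theorem restrict_cons_of_mem {X : Set α} {x : α} (c : Fin 5) (L : List (α × Fin 5))
    (h : x ∈ X) : restrict X ((x, c) :: L) = (x, c) :: restrict X L := by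
  simp [restrict, h]

theorem restrict_cons_of_notMem {X : Set α} {x : α} (c : Fin 5) (L : List (α × Fin 5))
    (h : x ∉ X) : restrict X ((x, c) :: L) = restrict X L := by
  simp [restrict, h]

theorem recolorsAt_cons_zero {s : α × Fin 5} {R : List (α × Fin 5)} {x : α} :
    recolorsAt (s :: R) 0 x ↔ s.1 = x := by
  obtain ⟨y, c⟩ := s
  simp [recolorsAt, eq_comm]

theorem recolorsAt_cons_succ {s : α × Fin 5} {R : List (α × Fin 5)} {i : ℕ} {x : α} :
    recolorsAt (s :: R) (i + 1) x ↔ recolorsAt R i x := by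
  simp [recolorsAt]

theorem recolorsAt.lt_length {R : List (α × Fin 5)} {i : ℕ} {x : α} (h : recolorsAt R i x) :
    i < R.length := by
  obtain ⟨c, hc⟩ := h
  exact (List.getElem?_eq_some_iff.1 hc).1

theorem recolorsAt.unique {R : List (α × Fin 5)} {i : ℕ} {x y : α} (hx : recolorsAt R i x)
    (hy : recolorsAt R i y) : x = y := by
  obtain ⟨c, hc⟩ := hx
  obtain ⟨d, hd⟩ := hy
  rw [hc] at hd
  exact congrArg Prod.fst (Option.some_injective _ hd)

def StepsSpaced (x : α) (R : List (α × Fin 5)) : Prop :=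
  ∀ i j, recolorsAt R i x → recolorsAt R j x → i < j → i + 3 ≤ j

theorem StepsSpaced.nil (x : α) : StepsSpaced x [] :=
  fun i _ hi => absurd hi.lt_length (Nat.not_lt_zero i)

theorem StepsSpaced.cons {x : α} {s : α × Fin 5} {R : List (α × Fin 5)} (h : StepsSpaced x R)
    (hs : s.1 = x → ¬ recolorsAt R 0 x ∧ ¬ recolorsAt R 1 x) : StepsSpaced x (s :: R) := by
  rintro (_ | i) (_ | j) hi hj hij
  · omega
  · obtain ⟨h0, h1⟩ := hs (recolorsAt_cons_zero.1 hi)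
    rw [recolorsAt_cons_succ] at hj
    rcases j with _ | _ | j
    exacts [absurd hj h0, absurd hj h1, by omega]
  · omega
  · rw [recolorsAt_cons_succ] at hi hj
    have := h i j hi hj (by omega)
    omega

theorem posIn_lt_posIn {X : Set α} {S : List (α × Fin 5)} {i j : ℕ} {w : α} (hij : i < j)
    (hi : recolorsAt S i w) (hw : w ∈ X) : posIn X S i < posIn X S j := by
  obtain ⟨c, hc⟩ := hi
  have hsucc : posIn X S (i + 1) = posIn X S i + 1 := by
    simp [posIn, List.take_add_one, hc, restrict, hw]
  have hmono : posIn X S (i + 1) ≤ posIn X S j :=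
    ((List.take_prefix_take_left hij).filter _).length_le
  omega

theorem nbrColors_cons_of_adj {G : SimpleGraph α} {A : List α} {u : α} {s : α × Fin 5}
    {L : List (α × Fin 5)} (h : G.Adj u s.1 ∧ s.1 ∈ A) :
    nbrColors G A u (s :: L) = s.2 :: nbrColors G A u L := by
  simp [nbrColors, h]

theorem nbrColors_cons_of_not_adj {G : SimpleGraph α} {A : List α} {u : α} {s : α × Fin 5}
    {L : List (α × Fin 5)} (h : ¬ (G.Adj u s.1 ∧ s.1 ∈ A)) :
    nbrColors G A u (s :: L) = nbrColors G A u L := by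
  simp [nbrColors, h]

theorem nbrColors_eq_nil_iff {G : SimpleGraph α} {A : List α} {u : α} {L : List (α × Fin 5)} :
    nbrColors G A u L = [] ↔ ∀ s ∈ L, ¬ (G.Adj u s.1 ∧ s.1 ∈ A) := by
  simp [nbrColors, List.filter_eq_nil_iff]

end Lists

section Coloring

variable {α : Type*}

theorem IsBestChoice.nbrColors_ne {G : SimpleGraph α} {A : List α} {u : α} {bu c : Fin 5}
    {σ : α → Fin 5} {future : List (α × Fin 5)} (hbc : IsBestChoice G A u bu σ future c)
    (htwo : ∃ d₁ d₂, d₁ ≠ d₂ ∧ ValidCol G A u σ d₁ ∧ ValidCol G A u σ d₂) (t : List (Fin 5)) :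
    nbrColors G A u future ≠ σ u :: c :: t := by
  intro hfut
  obtain ⟨hc, hbu, hclauses⟩ := hbc
  have hcmem : c ∈ nbrColors G A u future := by simp [hfut]
  have hbumem : bu ∈ nbrColors G A u future := by
    by_contra hb
    exact hb (hbu hb ▸ hcmem)
  obtain ⟨havoid, hlatest⟩ := hclauses hbumem
  have hall : ∀ d, ValidCol G A u σ d → d ∈ nbrColors G A u future := fun d hd => by
    by_contra hdn
    exact havoid ⟨d, hd, hdn⟩ hcmem
  -- a valid colour differs from `σ u`, so its first occurrence is at index `≥ 1`, the index of `c`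
  have heq : ∀ d, ValidCol G A u σ d → d = c := by
    intro d hd
    have hle := hlatest hall d hd
    rw [hfut, List.idxOf_cons_ne _ (Ne.symm hd.1), List.idxOf_cons_ne _ (Ne.symm hc.1),
      List.idxOf_cons_self] at hle
    by_contra hne
    rw [List.idxOf_cons_ne _ (Ne.symm hne)] at hle
    omega
  obtain ⟨d₁, d₂, hd, h₁, h₂⟩ := htwo
  exact hd ((heq _ h₁).trans (heq _ h₂).symm)

open Finset in
theorem exists_two_validCol {G : SimpleGraph α} {A : List α} {u : α}
    (hA : ¬ ∃ w₁ ∈ A, ∃ w₂ ∈ A, ∃ w₃ ∈ A,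
      G.Adj u w₁ ∧ G.Adj u w₂ ∧ G.Adj u w₃ ∧ w₁ ≠ w₂ ∧ w₁ ≠ w₃ ∧ w₂ ≠ w₃)
    (τ : α → Fin 5) : ∃ d₁ d₂, d₁ ≠ d₂ ∧ ValidCol G A u τ d₁ ∧ ValidCol G A u τ d₂ := by
  classical
  set N := (A.filter (G.Adj u ·)).toFinset
  have hN : #N ≤ 2 := by
    by_contra! h3
    obtain ⟨a, ha, b, hb, c, hc, hab, hac, hbc⟩ := two_lt_card.1 h3
    simp only [N, List.mem_toFinset, List.mem_filter, decide_eq_true_eq] at ha hb hc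
    exact hA ⟨a, ha.1, b, hb.1, c, hc.1, ha.2, hb.2, hc.2, hab, hac, hbc⟩
  set F := insert (τ u) (N.image τ)
  have hF : 1 < #Fᶜ := by
    have : #F ≤ 3 := (card_insert_le _ _).trans (Nat.succ_le_succ (card_image_le.trans hN))
    rw [card_compl, Fintype.card_fin]
    omega
  have hvalid : ∀ d ∈ Fᶜ, ValidCol G A u τ d := fun d hd => by
    rw [mem_compl] at hd
    refine ⟨fun h => hd (h ▸ mem_insert_self _ _), fun w hw huw h => hd ?_⟩
    exact h ▸ mem_insert_of_mem (mem_image_of_mem τ (by simp [N, hw, huw]))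
  obtain ⟨d₁, h₁, d₂, h₂, hd⟩ := one_lt_card.1 hF
  exact ⟨d₁, d₂, hd, hvalid _ h₁, hvalid _ h₂⟩

theorem IsPEOList.of_append {G : SimpleGraph α} {l₁ l₂ : List α}
    (h : IsPEOList G (l₁ ++ l₂)) : IsPEOList G l₂ := by
  induction l₁ with
  | nil => exact h
  | cons a l ih => exact ih h.2.2

end Coloring

theorem applySteps_cons (τ : V → Fin 5) (s : V × Fin 5) (L : List (V × Fin 5)) :
    applySteps τ (s :: L) = applySteps (Function.update τ s.1 s.2) L :=
  rfl

theorem applySteps_congr {τ τ' : V → Fin 5} (L : List (V × Fin 5)) {x : V} (h : τ x = τ' x) :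
    applySteps τ L x = applySteps τ' L x := by
  induction L generalizing τ τ' with
  | nil => exact h
  | cons s L ih => exact ih (by simp [Function.update_apply, h])

theorem applySteps_of_forall_ne {τ : V → Fin 5} {L : List (V × Fin 5)} {x : V}
    (h : ∀ s ∈ L, s.1 ≠ x) : applySteps τ L x = τ x := by
  induction L generalizing τ with
  | nil => rfl
  | cons s L ih =>
    rw [applySteps_cons, ih fun t ht => h t (.tail _ ht),
      Function.update_of_ne (h s (.head _)).symm]

theorem recolCount_restrict {X : Set V} {x : V} (hx : x ∈ X) (L : List (V × Fin 5)) :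
    recolCount (restrict X L) x = recolCount L x := by
  induction L with
  | nil => rfl
  | cons s L ih =>
    by_cases hsX : s.1 ∈ X
    · by_cases hs : s.1 = x <;> simpa [restrict_cons_of_mem _ _ hsX, recolCount, hs] using ih
    · have hs : s.1 ≠ x := fun h => hsX (h ▸ hx)
      simpa [restrict_cons_of_notMem _ _ hsX, recolCount, hs] using ih

theorem length_restrict_insert {X : Set V} {x : V} (hx : x ∉ X) (L : List (V × Fin 5)) :
    (restrict (insert x X) L).length = recolCount L x + (restrict X L).length := by
  induction L with
  | nil => rfl
  | cons s L ih =>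
    by_cases hs : s.1 = x
    · rw [restrict_cons_of_mem _ _ (by simp [hs]), restrict_cons_of_notMem _ _ (hs ▸ hx)]
      simp [recolCount, hs] at ih ⊢
      omega
    · by_cases hsX : s.1 ∈ X
      · rw [restrict_cons_of_mem _ _ (by simp [hsX]), restrict_cons_of_mem _ _ hsX]
        simp [recolCount, hs] at ih ⊢
        omega
      · rw [restrict_cons_of_notMem _ _ (by simp [hs, hsX]), restrict_cons_of_notMem _ _ hsX]
        simpa [recolCount, hs] using ih

open Classical in
theorem recolCount_eq_count (L : List (V × Fin 5)) (x : V) :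
    recolCount L x = Nat.count (recolorsAt L · x) L.length := by
  induction L with
  | nil => rfl
  | cons s L ih =>
    simp only [List.length_cons, Nat.count_succ', recolorsAt_cons_succ, ← ih,
      recolorsAt_cons_zero]
    by_cases hs : s.1 = x <;> simp [recolCount, hs]

namespace LBC

variable {G : SimpleGraph V} {A : List V} {u : V} {bu : Fin 5} {σ : V → Fin 5}
  {S' S : List (V × Fin 5)}

theorem applySteps_self (h : LBC G A u bu σ S' S) : applySteps σ S u = bu := by
  induction h with
  | done h => exact h
  | final => simp [applySteps]
  | skip _ _ ih => exact ih
  | insert _ _ _ ih => exact ih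

theorem applySteps_of_ne (h : LBC G A u bu σ S' S) {x : V} (hx : x ≠ u) :
    applySteps σ S x = applySteps σ S' x := by
  induction h with
  | done => rfl
  | final => simp [applySteps, hx]
  | skip _ _ ih => exact ih
  | insert _ _ _ ih =>
    rw [applySteps_cons, applySteps_cons, applySteps_cons, ih]
    exact applySteps_congr _ (by simp [Function.update_apply, hx])

theorem mem_or_mem (h : LBC G A u bu σ S' S) {s : V × Fin 5} (hs : s ∈ S) :
    s.1 = u ∨ s ∈ S' := by
  induction h with
  | done => simp at hs
  | final => simp_all
  | skip _ _ ih =>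
    rcases List.mem_cons.1 hs with rfl | hs
    exacts [.inr (.head _), (ih hs).imp_right (.tail _)]
  | insert _ _ _ ih =>
    simp only [List.mem_cons] at hs
    rcases hs with rfl | rfl | hs
    exacts [.inl rfl, .inr (.head _), (ih hs).imp_right (.tail _)]

theorem restrict_eq (h : LBC G A u bu σ S' S) {X : Set V} (hu : u ∉ X) :
    restrict X S = restrict X S' := by
  induction h with
  | done => rfl
  | final => simp [restrict, hu]
  | @skip _ w c _ _ _ _ ih =>
    by_cases hw : w ∈ X
    · simp [restrict_cons_of_mem _ _ hw, ih]
    · simp [restrict_cons_of_notMem _ _ hw, ih]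
  | @insert _ w c _ _ _ _ _ _ ih =>
    rw [restrict_cons_of_notMem _ _ hu]
    by_cases hw : w ∈ X
    · simp [restrict_cons_of_mem _ _ hw, ih]
    · simp [restrict_cons_of_notMem _ _ hw, ih]

theorem exists_nbrColors_eq_cons_of_recolorsAt_zero {Y : Set V}
    (hY : ∀ x ∈ A, x ∈ Y ↔ G.Adj u x) (hu : u ∉ A) (h : LBC G A u bu σ S' S)
    (hS' : ∀ s ∈ S', s.1 ∈ A) (h0 : recolorsAt (restrict Y S) 0 u) :
    (nbrColors G A u S' = [] ∧ σ u ≠ bu) ∨ ∃ t, nbrColors G A u S' = σ u :: t := by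
  induction h with
  | done => simp [restrict, recolorsAt] at h0
  | final hne => exact .inl ⟨rfl, hne⟩
  | @skip σ w c _ _ _ _ ih =>
    have hwA := hS' _ (.head _)
    have hwu : w ≠ u := fun h => hu (h ▸ hwA)
    by_cases hw : w ∈ Y
    · rw [restrict_cons_of_mem _ _ hw, recolorsAt_cons_zero] at h0
      exact absurd h0 hwu
    · rw [restrict_cons_of_notMem _ _ hw] at h0
      have hnadj : ¬ (G.Adj u w ∧ w ∈ A) := fun h => hw ((hY w hwA).2 h.1)
      rw [nbrColors_cons_of_not_adj hnadj]
      simpa [Function.update_of_ne hwu.symm] using ih (fun s hs => hS' s (.tail _ hs)) h0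
  | insert hins => exact .inr ⟨_, by rw [nbrColors_cons_of_adj ⟨hins.1, hins.2.1⟩, hins.2.2]⟩

theorem not_recolorsAt_zero_of_insert {Y : Set V} (hY : ∀ x ∈ A, x ∈ Y ↔ G.Adj u x)
    (hu : u ∉ A)
    (htwo : ∃ d₁ d₂, d₁ ≠ d₂ ∧ ValidCol G A u σ d₁ ∧ ValidCol G A u σ d₂)
    {w : V} {c c' : Fin 5} {rest : List (V × Fin 5)} (hins : G.Adj u w ∧ w ∈ A ∧ c = σ u)
    (hbc : IsBestChoice G A u bu σ ((w, c) :: rest) c')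
    (h : LBC G A u bu (Function.update (Function.update σ u c') w c) rest S)
    (hrest : ∀ s ∈ rest, s.1 ∈ A) (hfinal : applySteps σ ((w, c) :: rest) w ≠ bu) :
    ¬ recolorsAt (restrict Y S) 0 u := by
  obtain ⟨huw, hwA, hc⟩ := hins
  have hwu : w ≠ u := fun h => hu (h ▸ hwA)
  have hfut : nbrColors G A u ((w, c) :: rest) = c :: nbrColors G A u rest :=
    nbrColors_cons_of_adj ⟨huw, hwA⟩
  intro h0
  rcases h.exists_nbrColors_eq_cons_of_recolorsAt_zero hY hu hrest h0 with ⟨hnil, hne⟩ | ⟨t, ht⟩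
  · -- `c' ≠ bu` forces `bu` to be the only future neighbour colour `c`, the final colour of `w`
    rw [Function.update_of_ne hwu.symm, Function.update_self] at hne
    have hbu : bu ∈ nbrColors G A u ((w, c) :: rest) := by
      by_contra hbu
      exact hne (hbc.2.1 hbu)
    rw [hfut, hnil, List.mem_singleton] at hbu
    refine hfinal ?_
    rw [applySteps_cons, applySteps_of_forall_ne, Function.update_self, hbu]
    exact fun s hs hsw => nbrColors_eq_nil_iff.1 hnil s hs (hsw ▸ ⟨huw, hwA⟩)
  · rw [Function.update_of_ne hwu.symm, Function.update_self] at ht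
    exact hbc.nbrColors_ne htwo t (by rw [hfut, ht, hc])

theorem stepsSpaced_restrict {Y : Set V} (huY : u ∈ Y) (hY : ∀ x ∈ A, x ∈ Y ↔ G.Adj u x)
    (hu : u ∉ A)
    (htwo : ∀ τ : V → Fin 5, ∃ d₁ d₂, d₁ ≠ d₂ ∧ ValidCol G A u τ d₁ ∧ ValidCol G A u τ d₂)
    (h : LBC G A u bu σ S' S) (hS' : ∀ s ∈ S', s.1 ∈ A)
    (hfinal : ∀ w ∈ A, G.Adj u w → applySteps σ S' w ≠ bu) :
    StepsSpaced u (restrict Y S) := by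
  induction h with
  | done => exact StepsSpaced.nil u
  | final =>
    rw [restrict_cons_of_mem _ _ huY]
    exact (StepsSpaced.nil u).cons fun _ => ⟨nofun, nofun⟩
  | @skip σ w c rest _ _ _ ih =>
    have hwu : w ≠ u := fun h => hu (h ▸ hS' _ (.head _))
    have hR := ih (fun s hs => hS' s (.tail _ hs)) hfinal
    by_cases hw : w ∈ Y
    · rw [restrict_cons_of_mem _ _ hw]
      exact hR.cons fun h => absurd h hwu
    · rwa [restrict_cons_of_notMem _ _ hw]
  | @insert σ w c rest _ c' hins hbc hS ih =>
    have hwu : w ≠ u := fun h => hu (h ▸ hins.2.1)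
    have hrest : ∀ s ∈ rest, s.1 ∈ A := fun s hs => hS' s (.tail _ hs)
    have hR := ih hrest fun x hx hux => by
      have hxu : x ≠ u := (G.ne_of_adj hux).symm
      rw [applySteps_congr _ (τ' := Function.update σ w c) (by simp [Function.update_apply, hxu])]
      exact hfinal x hx hux
    have h0 := hS.not_recolorsAt_zero_of_insert hY hu (htwo σ) hins hbc hrest
      (hfinal w hins.2.1 hins.1)
    rw [restrict_cons_of_mem _ _ huY,
      restrict_cons_of_mem _ _ ((hY w hins.2.1).2 hins.1)]
    refine (hR.cons fun h => absurd h hwu).cons fun _ => ⟨?_, ?_⟩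
    · rw [recolorsAt_cons_zero]
      exact hwu
    · rwa [recolorsAt_cons_succ]

end LBC

namespace BCR

variable {G : SimpleGraph V} {α β : V → Fin 5} {vs : List V} {S : List (V × Fin 5)}

theorem fst_mem (h : BCR G α β vs S) {s : V × Fin 5} (hs : s ∈ S) : s.1 ∈ vs := by
  induction h with
  | nil => simp at hs
  | cons _ hL ih => exact (hL.mem_or_mem hs).elim (· ▸ .head _) fun h => .tail _ (ih h)

theorem applySteps_eq (h : BCR G α β vs S) (hnd : vs.Nodup) {u : V} (hu : u ∈ vs) :
    applySteps α S u = β u := by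
  induction h with
  | nil => simp at hu
  | @cons v vs _ _ _ hL ih =>
    obtain ⟨hv, hnd⟩ := List.nodup_cons.1 hnd
    rcases List.mem_cons.1 hu with rfl | hu
    · exact hL.applySteps_self
    · rw [hL.applySteps_of_ne (fun h => hv (h ▸ hu)), ih hnd hu]

theorem exists_LBC_restrict_eq {v : V} {pre post : List V} {X : Set V}
    (h : BCR G α β (pre ++ v :: post) S) (hX : ∀ u ∈ pre, u ∉ X) :
    ∃ T' T, BCR G α β post T' ∧ LBC G post v (β v) α T' T ∧ restrict X S = restrict X T := by
  induction pre generalizing S with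
  | nil =>
    cases h with
    | cons hS' hL => exact ⟨_, S, hS', hL, rfl⟩
  | cons u pre ih =>
    cases h with
    | cons hS' hL =>
      obtain ⟨T', T, hT', hT, hST⟩ := ih hS' fun x hx => hX x (.tail _ hx)
      exact ⟨T', T, hT', hT, (hL.restrict_eq (hX u (.head _))).trans hST⟩

end BCR

theorem idxOf_lt_idxOf_iff {pre post : List V} {v x : V} (hnd : (pre ++ v :: post).Nodup)
    (hx : x ∈ pre ++ v :: post) :
    (pre ++ v :: post).idxOf v < (pre ++ v :: post).idxOf x ↔ x ∈ post := by
  obtain ⟨-, hvpost, hdisj⟩ := List.nodup_append.1 hnd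
  replace hvpost := (List.nodup_cons.1 hvpost).1
  have hvpre : v ∉ pre := fun h => hdisj v h v (.head _) rfl
  rw [List.idxOf_append_of_notMem hvpre, List.idxOf_cons_self]
  rcases List.mem_append.1 hx with hx | hx
  · rw [List.idxOf_append_of_mem hx]
    have := List.idxOf_lt_length_iff.2 hx
    exact ⟨fun h => by omega, fun h => absurd rfl (hdisj x hx x (.tail _ h))⟩
  · have hxpre : x ∉ pre := fun h => hdisj x h x hx rfl
    rcases List.mem_cons.1 hx with rfl | hx
    · simp [List.idxOf_append_of_notMem hvpre, hvpost]
    · have hvx : v ≠ x := fun h => hvpost (h ▸ hx)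
      rw [List.idxOf_append_of_notMem hxpre, List.idxOf_cons_ne _ hvx]
      simp [hx]

theorem NPlus_append_cons {G : SimpleGraph V} {pre post : List V} {v : V}
    (hnd : (pre ++ v :: post).Nodup) (hall : ∀ x, x ∈ pre ++ v :: post) :
    NPlus G (pre ++ v :: post) v = {x | G.Adj v x ∧ x ∈ post} := by
  ext x
  simp only [NPlus, Set.mem_ofPred_eq, idxOf_lt_idxOf_iff hnd (hall x)]

theorem BCR.stepsSpaced_restrict_NPlusC {G : SimpleGraph V} {order : List V}
    (hnd : order.Nodup) (hall : ∀ x, x ∈ order) (hpeo : IsPEOList G order) {α β : V → Fin 5}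
    (hβ : IsProperColoring G β) {S : List (V × Fin 5)} (hS : BCR G α β order S) (v : V) :
    StepsSpaced v (restrict (NPlusC G order v) S) := by
  obtain ⟨pre, post, rfl⟩ := List.append_of_mem (hall v)
  have hN := NPlus_append_cons (G := G) hnd hall
  obtain ⟨hvpost, hndpost⟩ := List.nodup_cons.1 (List.nodup_append.1 hnd).2.1
  obtain ⟨T', T, hT', hT, hST⟩ := hS.exists_LBC_restrict_eq (X := NPlusC G _ v) fun x hx hxN => by
    have := (List.nodup_append.1 hnd).2.2 x hx
    rcases hxN with rfl | hxN
    · exact this _ (.head _) rfl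
    · rw [hN] at hxN
      exact this x (.tail _ hxN.2) rfl
  rw [hST]
  refine hT.stepsSpaced_restrict (Set.mem_insert _ _) (fun x hx => ?_) hvpost
    (exists_two_validCol (hpeo.of_append (l₁ := pre)).1) (fun s hs => hT'.fst_mem hs)
    fun w hw hvw hwβ => hβ hvw (by rw [← hwβ, hT'.applySteps_eq hndpost hw])
  simp only [NPlusC, hN, Set.mem_insert_iff, Set.mem_ofPred_eq, hx, and_true,
    or_iff_right_iff_imp]
  rintro rfl
  exact absurd hx hvpost

theorem ncard_savedForR_add_three_mul_le {G : SimpleGraph V} {order : List V} {v : V}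
    {R : List (V × Fin 5)} (h : StepsSpaced v R) :
    {p | SavedForR G order v R p}.ncard + 3 * recolCount R v ≤ R.length + 2 := by
  classical
  have hP : {p | SavedForR G order v R p} =
      ↑((Finset.range R.length).filter (SavedForR G order v R)) := by
    ext p
    simp only [Set.mem_ofPred_eq, Finset.coe_filter, Finset.mem_range]
    exact ⟨fun hp => ⟨hp.1.elim fun _ hw => hw.2.lt_length, hp⟩, And.right⟩
  rw [hP, Set.ncard_coe_finset, recolCount_eq_count, Nat.count_eq_card_filter_range]
  refine card_add_three_mul_card_le (Finset.filter_subset _ _) (Finset.filter_subset _ _)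
    (Finset.disjoint_filter.2 fun p _ hp hpv => ?_) (fun i hi j hj => ?_) fun i hi j hj hij => ?_
  · obtain ⟨w, hw, hpw⟩ := hp.1
    exact G.ne_of_adj hw.1 (hpv.unique hpw)
  · exact h i j (Finset.mem_filter.1 hi).2 (Finset.mem_filter.1 hj).2
  · have hi := (Finset.mem_filter.1 hi).2
    have hj := (Finset.mem_filter.1 hj).2
    have := h i j hi hj hij
    have hgap : ∀ p, i < p → p ≤ i + 2 → ¬ SavedForR G order v R p := by
      rintro p hip hpi ⟨-, hbefore | hafter | hnear⟩
      exacts [hbefore i hip.le hi, hafter j (by omega) hj, hnear i (by omega) hip hi]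
    simp only [Finset.mem_filter, not_and]
    exact ⟨fun _ => hgap _ (by omega) (by omega), fun _ => hgap _ (by omega) le_rfl⟩

theorem ncard_savedFor_le (G : SimpleGraph V) (order : List V) (S : List (V × Fin 5)) (v : V) :
    {i | SavedFor G order S v i}.ncard ≤
      {p | SavedForR G order v (restrict (NPlusC G order v) S) p}.ncard := by
  have hmono : ∀ i ∈ {i | SavedFor G order S v i}, ∀ j, i < j →
      posIn (NPlusC G order v) S i < posIn (NPlusC G order v) S j := fun i hi j hij => by
    obtain ⟨w, hw, hiw⟩ := hi.1
    exact posIn_lt_posIn hij hiw (Set.mem_insert_of_mem _ hw)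
  refine Set.ncard_le_ncard_of_injOn _ (fun i hi => hi.2) (fun i hi j hj hij => ?_) ?_
  · rcases lt_trichotomy i j with h | h | h
    exacts [absurd hij (hmono i hi j h).ne, h, absurd hij (hmono j hj i h).ne']
  · exact (Set.finite_Iio _).subset fun p hp => hp.1.elim fun _ hw => hw.2.lt_length

theorem statement_4_general {V : Type*} [DecidableEq V] (G : SimpleGraph V)
    (order : List V) (hnd : order.Nodup) (hall : ∀ x : V, x ∈ order)
    (hpeo : IsPEOList G order)
    (α β : V → Fin 5) (hβ : IsProperColoring G β)
    (S : List (V × Fin 5)) (hS : BCR G α β order S)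
    (v : V) (r m : ℕ)
    (hr : r = Set.ncard {i : ℕ | SavedFor G order S v i})
    (hm : m = (restrict (NPlus G order v) S).length) :
    (2 * recolCount S v : ℤ) ≤ 2 - (r : ℤ) + 2 * (((m + 1) / 2 : ℕ) : ℤ) := by
  have hcount := ncard_savedForR_add_three_mul_le (G := G) (order := order)
    (hS.stepsSpaced_restrict_NPlusC hnd hall hpeo hβ v)
  have hsaved := ncard_savedFor_le G order S v
  have hlen : (restrict (NPlusC G order v) S).length = recolCount S v + m :=
    hm ▸ length_restrict_insert (fun h => G.irrefl h.1) S
  have hv : recolCount (restrict (NPlusC G order v) S) v = recolCount S v :=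
    recolCount_restrict (Set.mem_insert v _) S
  omega

/-- Let `S` be a best choice recoloring of `G` and `v` a vertex of `G`.
If `r` is the number of steps of `S` saved for `v` and `m = Σ_{w ∈ N⁺(v)} |S_{|w}|` (the
length of `S_{|N⁺(v)}`), then `2 · |S_{|v}| ≤ 2 − r + 2 · ⌈m / 2⌉` (in `ℤ`, where
`⌈m / 2⌉ = (m + 1) / 2` by natural division). -/
theorem statement_4 {V : Type*} [Fintype V] [DecidableEq V] (G : SimpleGraph V)
    (order : List V) (hnd : order.Nodup) (hall : ∀ x : V, x ∈ order)
    (hpeo : IsPEOList G order)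
    (α β : V → Fin 5) (hα : IsProperColoring G α) (hβ : IsProperColoring G β)
    (S : List (V × Fin 5)) (hS : BCR G α β order S)
    (v : V) (r m : ℕ)
    (hr : r = Set.ncard {i : ℕ | SavedFor G order S v i})
    (hm : m = (restrict (NPlus G order v) S).length) :
    (2 * recolCount S v : ℤ) ≤ 2 - (r : ℤ) + 2 * (((m + 1) / 2 : ℕ) : ℤ) :=
  statement_4_general G order hnd hall hpeo α β hβ S hS v r m hr hm
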